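/- Let (V,d) be a finite metric space, v_0 ∈ V, and let v_0, v_1, ..., v_{n-1} be the nearest-unvisited-vertex (NUV) order: for each i ≥ 1, v_i is the closest point to v_{i-1} among points not in {v_0,...,v_{i-1}} (assume all relevant distances are distinct so this is well-defined). Fix v* ∈ V and r > 0, and let B = {v ∈ V : d(v,v*) ≤ r}. Define D(v_i) = d(v_i, v_{i+1}) for i < n-1 and D(v_{n-1}) = 0. Then D(v) ≤ 2r for all v ∈ B with at most one exception, namely the point of B visited last. -/
import Mathlib


/-- The length `D(v_i)` of the step taken from the `i`-th visited point
(`0` from the last point). -/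
noncomputable def stepLen {V : Type*} [MetricSpace V] {n : ℕ} (e : Fin n → V) (i : Fin n) : ℝ :=
  if h : i.val + 1 < n then dist (e i) (e ⟨i.val + 1, h⟩) else 0

/-- `e` is a nearest-unvisited-vertex (greedy) order: each step goes to a point at least as
close as every point visited later. -/
def IsNUV {V : Type*} [MetricSpace V] {n : ℕ} (e : Fin n → V) : Prop :=
  ∀ i j : Fin n, i < j → stepLen e i ≤ dist (e i) (e j)

/-- All pairwise distances between distinct points are distinct. -/
def DistinctDistances (V : Type*) [MetricSpace V] : Prop :=
  ∀ a b c d : V, a ≠ b → c ≠ d → dist a b = dist c d → (a = c ∧ b = d) ∨ (a = d ∧ b = c)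

/-- Key observation (2): within the ball `B(v*, r)` every point except possibly the
last-visited one has NUV step length at most `2r`. -/
theorem stmt1 {V : Type*} [MetricSpace V] [Fintype V] {n : ℕ} (hcard : Fintype.card V = n)
    (hd : DistinctDistances V) (e : Fin n ≃ V) (hNUV : IsNUV (⇑e))
    (vstar : V) (r : ℝ) (hr : 0 < r)
    (i j : Fin n) (hi : dist (e i) vstar ≤ r) (hj : dist (e j) vstar ≤ r) (hij : i < j) :
    stepLen (⇑e) i ≤ 2 * r := by
  calc stepLen (⇑e) i ≤ dist (e i) (e j) := hNUV i j hij
    _ ≤ dist (e i) vstar + dist vstar (e j) := dist_triangle _ _ _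
    _ ≤ r + r := by rw [dist_comm vstar]; exact add_le_add hi hj
    _ = 2 * r := by ring
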